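/- There exist absolute constants c > 0 and n₀ such that for every integer n ≥ n₀ and every real Δ with √n ≤ Δ ≤ n, the n-point set S_Δ = { (t/n, cos(t/Δ), sin(t/Δ)) : t ∈ {1, …, n} } satisfies: any two distinct points of S_Δ whose parameters t, u satisfy |t − u| < 2πΔ form a Delaunay edge of S_Δ; consequently S_Δ has at least c·nΔ Delaunay edges, and the spread of S_Δ is Θ(Δ). -/

import Mathlib

noncomputable section
open scoped Classical ENNReal Pointwise
open MeasureTheory Real

/-- Points of `ℝ³` as Euclidean space. -/
abbrev E3 : Type := EuclideanSpace ℝ (Fin 3)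

/-- The point `(x, y, z) ∈ ℝ³`. -/
def mk3 (x y z : ℝ) : E3 := (WithLp.equiv 2 (Fin 3 → ℝ)).symm ![x, y, z]

/-- `p` and `q` form a Delaunay edge of the finite set `S`: they are distinct points of `S`
lying on a sphere having no point of `S` in its interior. -/
def IsDelaunayEdge (S : Finset E3) (p q : E3) : Prop :=
  p ∈ S ∧ q ∈ S ∧ p ≠ q ∧
    ∃ (c : E3) (ρ : ℝ), 0 < ρ ∧ dist c p = ρ ∧ dist c q = ρ ∧ ∀ s ∈ S, ρ ≤ dist c s

/-- The number of (unordered) Delaunay edges of `S`. -/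
def delaunayEdgeCount (S : Finset E3) : ℕ :=
  Set.ncard {pq : E3 × E3 | IsDelaunayEdge S pq.1 pq.2} / 2

/-- The minimum pairwise distance of a finite point set. -/
def minPairDist (S : Finset E3) : ℝ :=
  sInf {d : ℝ | ∃ p ∈ S, ∃ q ∈ S, p ≠ q ∧ d = dist p q}

/-- The spread of a finite point set: diameter divided by minimum pairwise distance. -/
def spread (S : Finset E3) : ℝ := Metric.diam (S : Set E3) / minPairDist S
/-- The `t`-th point of the helical sample of pitch `Δ/n`: `(t/n, cos(t/Δ), sin(t/Δ))`. -/
def helixPointD (n : ℕ) (Δ : ℝ) (t : ℕ) : E3 :=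
  mk3 ((t : ℝ) / n) (Real.cos (t / Δ)) (Real.sin (t / Δ))

/-- The helical sample `S_Δ = { (t/n, cos(t/Δ), sin(t/Δ)) : t ∈ {1, …, n} }`. -/
def helixSampleD (n : ℕ) (Δ : ℝ) : Finset E3 := (Finset.Icc 1 n).image (helixPointD n Δ)

/-!
Two helix points with parameters `t`, `u`, `|t - u| < 2πΔ`, lie on an empty sphere centred
across the axis from the helix point with the midpoint parameter `m = (t + u) / 2`. At the right
distance `R = a Δ² / (n² sin a)` from the axis, `a = |t - u| / (2Δ) < π`, the squared distance
from the centre to the helix point with parameter `s` is an increasing affine function of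
`sin a * y ^ 2 + 2 * a * cos y`, `y = (m - s) / Δ`, and this function is minimal at `y = ±a`,
i.e. at `s = t, u`. Pairing each of the first `n - ⌊Δ/2⌋` points with the `⌊Δ/2⌋` points after it
gives `≳ nΔ` edges. The spread is `Θ(Δ)`: the diameter is `Θ(1)`, consecutive points are
`O(1/Δ)` apart, and, as `n ≤ Δ²`, no two points are closer than `1/(2Δ)`.
-/

namespace Real

lemma mul_cos_le_sin {x : ℝ} (hx₀ : 0 ≤ x) (hxπ : x ≤ π) : x * cos x ≤ sin x := by
  rcases lt_or_ge x (π / 2) with hx | hx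
  · have hcos : 0 < cos x := cos_pos_of_mem_Ioo ⟨by linarith [pi_pos], hx⟩
    have := le_tan hx₀ hx
    rwa [tan_eq_sin_div_cos, le_div_iff₀ hcos] at this
  · exact (mul_nonpos_of_nonneg_of_nonpos hx₀ (cos_nonpos_of_pi_div_two_le_of_le hx
      (by linarith [pi_pos]))).trans (sin_nonneg_of_nonneg_of_le_pi hx₀ hxπ)

/-- `sin x / x` is antitone on `[0, π]`. -/
lemma mul_sin_le_mul_sin {x y : ℝ} (hy : 0 ≤ y) (hyx : y ≤ x) (hxπ : x ≤ π) :
    y * sin x ≤ x * sin y := by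
  obtain ⟨v, hv, rfl⟩ : ∃ v, 0 ≤ v ∧ x = y + v := ⟨x - y, by linarith, by ring⟩
  have hsy : 0 ≤ sin y := sin_nonneg_of_nonneg_of_le_pi hy (by linarith)
  have hsv : 0 ≤ sin v := sin_nonneg_of_nonneg_of_le_pi hv (by linarith)
  rw [sin_add]
  nlinarith [mul_le_mul_of_nonneg_left (cos_le_one v) (mul_nonneg hy hsy),
    mul_le_mul_of_nonneg_right (mul_cos_le_sin hy (by linarith)) hsv,
    mul_le_mul_of_nonneg_left (sin_le hv) hsy]

lemma sin_add_mul_mul_le {u w : ℝ} (hu₀ : 0 ≤ u) (huπ : u ≤ π) (hw₀ : 0 ≤ w) (hwπ : w ≤ π) :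
    sin (u + w) * u * w ≤ (u + w) * sin u * sin w := by
  have hsu : 0 ≤ sin u := sin_nonneg_of_nonneg_of_le_pi hu₀ huπ
  have hsw : 0 ≤ sin w := sin_nonneg_of_nonneg_of_le_pi hw₀ hwπ
  rw [sin_add]
  nlinarith [mul_le_mul_of_nonneg_left (mul_cos_le_sin hw₀ hwπ) (mul_nonneg hu₀ hsu),
    mul_le_mul_of_nonneg_left (mul_cos_le_sin hu₀ huπ) (mul_nonneg hw₀ hsw)]

lemma sin_mul_sq_add_two_mul_cos_le_of_le_pi {a x : ℝ} (ha₀ : 0 ≤ a) (haπ : a ≤ π) (hx₀ : 0 ≤ x)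
    (hxπ : x ≤ π) : sin a * a ^ 2 + 2 * a * cos a ≤ sin a * x ^ 2 + 2 * a * cos x := by
  -- with `u = (x + a) / 2`, `v = (x - a) / 2` the claim reads `a * sin u * sin v ≤ u * v * sin a`
  have hcos : cos x - cos a = -2 * sin ((x + a) / 2) * sin ((x - a) / 2) := cos_sub_cos x a
  have hsu : 0 ≤ sin ((x + a) / 2) := sin_nonneg_of_nonneg_of_le_pi (by linarith) (by linarith)
  rcases le_total a x with hax | hxa
  · have hsinc := mul_sin_le_mul_sin ha₀ (x := (x + a) / 2) (by linarith) (by linarith)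
    have hsv : 0 ≤ sin ((x - a) / 2) := sin_nonneg_of_nonneg_of_le_pi (by linarith) (by linarith)
    nlinarith [mul_le_mul_of_nonneg_right hsinc hsv,
      mul_le_mul_of_nonneg_left (sin_le (x := (x - a) / 2) (by linarith))
        (mul_nonneg (by linarith : 0 ≤ (x + a) / 2) (sin_nonneg_of_nonneg_of_le_pi ha₀ haπ))]
  · have hsub := sin_add_mul_mul_le (u := (x + a) / 2) (w := (a - x) / 2) (by linarith)
      (by linarith) (by linarith) (by linarith)
    rw [show (x + a) / 2 + (a - x) / 2 = a by ring] at hsub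
    rw [show (x - a) / 2 = -((a - x) / 2) by ring, sin_neg] at hcos
    nlinarith

lemma sin_mul_sq_add_two_mul_cos_le {a : ℝ} (ha₀ : 0 ≤ a) (haπ : a ≤ π) (x : ℝ) :
    sin a * a ^ 2 + 2 * a * cos a ≤ sin a * x ^ 2 + 2 * a * cos x := by
  wlog hx₀ : 0 ≤ x generalizing x
  · simpa using this (-x) (by linarith)
  rcases le_total x π with hxπ | hπx
  · exact sin_mul_sq_add_two_mul_cos_le_of_le_pi ha₀ haπ hx₀ hxπ
  · calc sin a * a ^ 2 + 2 * a * cos a ≤ sin a * π ^ 2 + 2 * a * cos π :=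
          sin_mul_sq_add_two_mul_cos_le_of_le_pi ha₀ haπ pi_pos.le le_rfl
      _ ≤ sin a * x ^ 2 + 2 * a * cos x := by
          rw [cos_pi]
          nlinarith [neg_one_le_cos x, sin_nonneg_of_nonneg_of_le_pi ha₀ haπ,
            mul_le_mul_of_nonneg_left (pow_le_pow_left₀ pi_pos.le hπx 2)
              (sin_nonneg_of_nonneg_of_le_pi ha₀ haπ)]

end Real

lemma dist_mk3_sq (x y z x' y' z' : ℝ) :
    dist (mk3 x y z) (mk3 x' y' z') ^ 2 = (x - x') ^ 2 + (y - y') ^ 2 + (z - z') ^ 2 := by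
  rw [EuclideanSpace.dist_eq, Real.sq_sqrt (by positivity)]
  simp [mk3, Fin.sum_univ_three, Real.dist_eq, sq_abs]

lemma dist_mk3_cylindrical_sq (z r θ z' r' θ' : ℝ) :
    dist (mk3 z (r * cos θ) (r * sin θ)) (mk3 z' (r' * cos θ') (r' * sin θ')) ^ 2 =
      (z - z') ^ 2 + r ^ 2 + r' ^ 2 - 2 * r * r' * cos (θ - θ') := by
  rw [dist_mk3_sq, cos_sub]
  linear_combination r ^ 2 * sin_sq_add_cos_sq θ + r' ^ 2 * sin_sq_add_cos_sq θ'

lemma isDelaunayEdge_of_forall_dist_le {S : Finset E3} {p q : E3} (hp : p ∈ S) (hq : q ∈ S)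
    (hpq : p ≠ q) (c : E3) (hcpq : dist c p = dist c q) (hmin : ∀ s ∈ S, dist c p ≤ dist c s) :
    IsDelaunayEdge S p q := by
  refine ⟨hp, hq, hpq, c, dist c p, ?_, rfl, hcpq.symm, hmin⟩
  refine dist_pos.2 fun hcp => hpq ?_
  rw [← dist_eq_zero.1 (hcpq.symm.trans (dist_eq_zero.2 hcp)), hcp]

lemma card_div_two_le_delaunayEdgeCount {S : Finset E3} {ι : Type*} {T : Finset ι}
    {f : ι → E3 × E3} (hf : Set.InjOn f T) (hedge : ∀ i ∈ T, IsDelaunayEdge S (f i).1 (f i).2) :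
    T.card / 2 ≤ delaunayEdgeCount S := by
  have hfin : {pq : E3 × E3 | IsDelaunayEdge S pq.1 pq.2}.Finite :=
    (S ×ˢ S).finite_toSet.subset fun pq h => by simpa using ⟨h.1, h.2.1⟩
  refine Nat.div_le_div_right ?_
  calc T.card = (f '' T).ncard := by rw [hf.ncard_image, Set.ncard_coe_finset]
    _ ≤ _ := Set.ncard_le_ncard (by rintro _ ⟨i, hi, rfl⟩; exact hedge i hi) hfin

lemma minPairDist_le_dist {S : Finset E3} {p q : E3} (hp : p ∈ S) (hq : q ∈ S) (hpq : p ≠ q) :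
    minPairDist S ≤ dist p q :=
  csInf_le ⟨0, by rintro _ ⟨p, -, q, -, -, rfl⟩; exact dist_nonneg⟩ ⟨p, hp, q, hq, hpq, rfl⟩

lemma le_minPairDist {S : Finset E3} {δ : ℝ} {p q : E3} (hp : p ∈ S) (hq : q ∈ S) (hpq : p ≠ q)
    (h : ∀ p ∈ S, ∀ q ∈ S, p ≠ q → δ ≤ dist p q) : δ ≤ minPairDist S :=
  le_csInf ⟨_, p, hp, q, hq, hpq, rfl⟩ (by rintro _ ⟨p, hp, q, hq, hpq, rfl⟩; exact h p hp q hq hpq)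

lemma helixPointD_eq_mk3 (n : ℕ) (Δ : ℝ) (t : ℕ) :
    helixPointD n Δ t = mk3 (t / n) (1 * cos (t / Δ)) (1 * sin (t / Δ)) := by
  simp only [helixPointD, one_mul]

lemma helixPointD_injective {n : ℕ} (hn : n ≠ 0) (Δ : ℝ) :
    Function.Injective (helixPointD n Δ) := by
  intro t u h
  have h0 : (t : ℝ) / n = u / n := congrArg (fun p : E3 => p 0) h
  rw [div_left_inj' (by exact_mod_cast hn)] at h0
  exact_mod_cast h0

lemma helixPointD_mem_helixSampleD {n : ℕ} {Δ : ℝ} {t : ℕ} (ht : t ∈ Finset.Icc 1 n) :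
    helixPointD n Δ t ∈ helixSampleD n Δ :=
  Finset.mem_image_of_mem _ ht

lemma dist_helixPointD_sq (n : ℕ) (Δ : ℝ) (t u : ℕ) :
    dist (helixPointD n Δ t) (helixPointD n Δ u) ^ 2 =
      (((t : ℝ) - u) / n) ^ 2 + 4 * sin ((t - u) / (2 * Δ)) ^ 2 := by
  rw [helixPointD_eq_mk3, helixPointD_eq_mk3, dist_mk3_cylindrical_sq, sin_sq_eq_half_sub]
  ring_nf

def helixCenter (n : ℕ) (Δ R m : ℝ) : E3 := mk3 (m / n) (-R * cos (m / Δ)) (-R * sin (m / Δ))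

lemma dist_helixCenter_sq {n : ℕ} {Δ a : ℝ} (hn : n ≠ 0) (hΔ : Δ ≠ 0) (ha : sin a ≠ 0)
    (m : ℝ) (s : ℕ) :
    dist (helixCenter n Δ (a * Δ ^ 2 / (n ^ 2 * sin a)) m) (helixPointD n Δ s) ^ 2 =
      Δ ^ 2 / (n ^ 2 * sin a) * (sin a * ((m - s) / Δ) ^ 2 + 2 * a * cos ((m - s) / Δ)) +
        (a * Δ ^ 2 / (n ^ 2 * sin a)) ^ 2 + 1 := by
  rw [helixCenter, helixPointD_eq_mk3, dist_mk3_cylindrical_sq]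
  field_simp
  ring

theorem isDelaunayEdge_helixSampleD {n : ℕ} {Δ : ℝ} (hΔ : 0 < Δ) {t u : ℕ}
    (ht : t ∈ Finset.Icc 1 n) (hu : u ∈ Finset.Icc 1 n) (htu : t ≠ u)
    (hclose : |(t : ℝ) - u| < 2 * π * Δ) :
    IsDelaunayEdge (helixSampleD n Δ) (helixPointD n Δ t) (helixPointD n Δ u) := by
  have hn : n ≠ 0 := by obtain ⟨h₁, h₂⟩ := Finset.mem_Icc.1 ht; omega
  set y : ℝ := (t - u) / (2 * Δ)
  set a : ℝ := |(t : ℝ) - u| / (2 * Δ)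
  have hya : |y| = a := by rw [abs_div, abs_of_pos (by positivity : 0 < 2 * Δ)]
  have ha₀ : 0 < a := by
    rw [← hya]
    exact abs_pos.2 (div_ne_zero (sub_ne_zero.2 (by exact_mod_cast htu)) (by positivity))
  have haπ : a < π := by rw [div_lt_iff₀ (by positivity)]; linarith
  have hsin : 0 < sin a := sin_pos_of_pos_of_lt_pi ha₀ haπ
  set m : ℝ := (t + u) / 2
  set c := helixCenter n Δ (a * Δ ^ 2 / (n ^ 2 * sin a)) m
  have hdist := dist_helixCenter_sq hn hΔ.ne' hsin.ne' m
  have hyt : (m - t) / Δ = -y := by ring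
  have hyu : (m - u) / Δ = y := by ring
  have heven : sin a * y ^ 2 + 2 * a * cos y = sin a * a ^ 2 + 2 * a * cos a := by
    rw [← hya, sq_abs, cos_abs]
  have hct : dist c (helixPointD n Δ t) ^ 2 =
      Δ ^ 2 / (n ^ 2 * sin a) * (sin a * a ^ 2 + 2 * a * cos a) +
        (a * Δ ^ 2 / (n ^ 2 * sin a)) ^ 2 + 1 := by
    rw [hdist, hyt, neg_sq, cos_neg, heven]
  refine isDelaunayEdge_of_forall_dist_le (helixPointD_mem_helixSampleD ht)
    (helixPointD_mem_helixSampleD hu) ((helixPointD_injective hn Δ).ne htu) c ?_ ?_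
  · rw [← pow_left_inj₀ dist_nonneg dist_nonneg two_ne_zero, hct, hdist, hyu, heven]
  · intro p hp
    obtain ⟨s, -, rfl⟩ := Finset.mem_image.1 hp
    rw [← pow_le_pow_iff_left₀ dist_nonneg dist_nonneg two_ne_zero, hct, hdist]
    gcongr Δ ^ 2 / (n ^ 2 * sin a) * ?_ + _ + _
    exact sin_mul_sq_add_two_mul_cos_le ha₀.le haπ.le _

theorem mul_le_delaunayEdgeCount_helixSampleD {n : ℕ} {Δ : ℝ} (hΔ : 4 ≤ Δ) (hΔn : Δ ≤ n) :
    n * Δ / 32 ≤ delaunayEdgeCount (helixSampleD n Δ) := by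
  set K := ⌊Δ / 2⌋₊
  have hKΔ : (K : ℝ) ≤ Δ / 2 := Nat.floor_le (by positivity)
  have hΔK : Δ / 4 ≤ K := by linarith [Nat.sub_one_lt_floor (Δ / 2)]
  have hKn : K ≤ n := by exact_mod_cast hKΔ.trans (by linarith : Δ / 2 ≤ n)
  have hn : n ≠ 0 := by rintro rfl; norm_num at hΔn; linarith
  have hcount : (n - K) * K / 2 ≤ delaunayEdgeCount (helixSampleD n Δ) := by
    have hedges := card_div_two_le_delaunayEdgeCount (S := helixSampleD n Δ)
      (T := Finset.Icc 1 (n - K) ×ˢ Finset.Icc 1 K)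
      (f := fun p => (helixPointD n Δ p.1, helixPointD n Δ (p.1 + p.2))) ?_ ?_
    · simpa using hedges
    · rintro ⟨t, j⟩ - ⟨t', j'⟩ - h
      have hinj := helixPointD_injective hn Δ
      simp only [Prod.mk.injEq] at h ⊢
      have := hinj h.1
      have := hinj h.2
      omega
    · rintro ⟨t, j⟩ hp
      simp only [Finset.mem_product, Finset.mem_Icc] at hp
      refine isDelaunayEdge_helixSampleD (by linarith) (Finset.mem_Icc.2 ⟨by omega, by omega⟩)
        (Finset.mem_Icc.2 ⟨by omega, by omega⟩) (by omega) ?_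
      have hj : (j : ℝ) ≤ K := by exact_mod_cast hp.2.2
      rw [Nat.cast_add, sub_add_cancel_left, abs_neg, Nat.abs_cast]
      nlinarith [pi_gt_three]
  have hrem : (n - K) * K ≤ 2 * ((n - K) * K / 2) + 1 := by omega
  have hrem' : (((n - K) * K : ℕ) : ℝ) ≤ 2 * (((n - K) * K / 2 : ℕ) : ℝ) + 1 := by
    exact_mod_cast hrem
  have hcount' : (((n - K) * K / 2 : ℕ) : ℝ) ≤ delaunayEdgeCount (helixSampleD n Δ) := by
    exact_mod_cast hcount
  rw [Nat.cast_mul, Nat.cast_sub hKn] at hrem'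
  have hprod : n * Δ / 8 ≤ (n - K) * K := by nlinarith
  have hnΔ : 16 ≤ n * Δ := by nlinarith
  linarith

lemma abs_sub_div_le_dist_helixPointD (n : ℕ) (Δ : ℝ) (t u : ℕ) :
    |((t : ℝ) - u) / n| ≤ dist (helixPointD n Δ t) (helixPointD n Δ u) := by
  refine (pow_le_pow_iff_left₀ (abs_nonneg _) dist_nonneg two_ne_zero).1 ?_
  rw [sq_abs, dist_helixPointD_sq]
  nlinarith [sq_nonneg (sin (((t : ℝ) - u) / (2 * Δ)))]

lemma dist_helixPointD_le_three {n : ℕ} (Δ : ℝ) {t u : ℕ} (ht : t ∈ Finset.Icc 1 n)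
    (hu : u ∈ Finset.Icc 1 n) : dist (helixPointD n Δ t) (helixPointD n Δ u) ≤ 3 := by
  rw [Finset.mem_Icc] at ht hu
  have hn : (0 : ℝ) < n := by exact_mod_cast (by omega : 0 < n)
  have htn : (t : ℝ) ≤ n := by exact_mod_cast ht.2
  have hun : (u : ℝ) ≤ n := by exact_mod_cast hu.2
  have htu : |((t : ℝ) - u) / n| ≤ 1 := by
    rw [abs_div, Nat.abs_cast, div_le_one hn, abs_le]
    constructor <;> linarith [(t.cast_nonneg : (0 : ℝ) ≤ t), (u.cast_nonneg : (0 : ℝ) ≤ u)]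
  refine (pow_le_pow_iff_left₀ dist_nonneg (by norm_num) two_ne_zero).1 ?_
  rw [dist_helixPointD_sq]
  nlinarith [(sq_le_one_iff_abs_le_one _).2 htu, sin_sq_le_one (((t : ℝ) - u) / (2 * Δ))]

lemma dist_helixPointD_one_two_le {n : ℕ} {Δ : ℝ} (hΔ : 0 < Δ) (hΔn : Δ ≤ n) :
    dist (helixPointD n Δ 1) (helixPointD n Δ 2) ≤ 2 / Δ := by
  refine (pow_le_pow_iff_left₀ dist_nonneg (by positivity) two_ne_zero).1 ?_
  calc dist (helixPointD n Δ 1) (helixPointD n Δ 2) ^ 2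
      = (1 / n) ^ 2 + 4 * sin (-1 / (2 * Δ)) ^ 2 := by
        rw [dist_helixPointD_sq]; norm_num; ring
    _ ≤ (1 / Δ) ^ 2 + 4 * (-1 / (2 * Δ)) ^ 2 := by
        gcongr ?_ ^ 2 + 4 * ?_
        · exact one_div_le_one_div_of_le hΔ hΔn
        · exact sin_sq_le_sq
    _ ≤ (2 / Δ) ^ 2 := by
        field_simp
        norm_num

lemma one_div_two_mul_le_dist_helixPointD {n : ℕ} (hn : 0 < n) {Δ : ℝ} (hΔ : 0 < Δ)
    (hnΔ : n ≤ Δ ^ 2) {t u : ℕ} (htu : t ≠ u) :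
    1 / (2 * Δ) ≤ dist (helixPointD n Δ t) (helixPointD n Δ u) := by
  wlog hut : u < t generalizing t u
  · rw [dist_comm]; exact this htu.symm (by omega)
  have hk : (1 : ℝ) ≤ t - u := by
    have : ((u + 1 : ℕ) : ℝ) ≤ t := by exact_mod_cast hut
    push_cast at this; linarith
  refine (pow_le_pow_iff_left₀ (by positivity) dist_nonneg two_ne_zero).1 ?_
  rw [dist_helixPointD_sq]
  set θ : ℝ := (t - u) / (2 * Δ)
  rcases le_total θ (π / 2) with hθ | hθ
  · have hθ₀ : 1 / (2 * Δ) ≤ θ := div_le_div_of_nonneg_right hk (by positivity)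
    have hθpos : 0 < θ := (by positivity : 0 < 1 / (2 * Δ)).trans_le hθ₀
    have hsin : θ / 2 ≤ sin θ := by
      have hπ : 1 / 2 ≤ 2 / π := by rw [le_div_iff₀ pi_pos]; linarith [pi_le_four]
      linarith [mul_le_sin hθpos.le hθ, mul_le_mul_of_nonneg_right hπ hθpos.le]
    nlinarith [pow_le_pow_left₀ (by positivity) hθ₀ 2, pow_le_pow_left₀ (by positivity) hsin 2,
      sq_nonneg (((t : ℝ) - u) / n)]
  · have hfar : 1 / (2 * Δ) ≤ ((t : ℝ) - u) / n := by
      rw [div_le_div_iff₀ (by positivity) (by exact_mod_cast hn)]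
      rw [le_div_iff₀ (by positivity)] at hθ
      nlinarith [pi_gt_three]
    nlinarith [pow_le_pow_left₀ (by positivity) hfar 2, sq_nonneg (sin θ)]

theorem spread_helixSampleD_mem_Icc {n : ℕ} (hn : 2 ≤ n) {Δ : ℝ} (hΔ : 0 < Δ) (hnΔ : n ≤ Δ ^ 2)
    (hΔn : Δ ≤ n) : spread (helixSampleD n Δ) ∈ Set.Icc (Δ / 4) (6 * Δ) := by
  have hmem : ∀ {t}, 1 ≤ t → t ≤ n → helixPointD n Δ t ∈ helixSampleD n Δ :=
    fun h₁ h₂ => helixPointD_mem_helixSampleD (Finset.mem_Icc.2 ⟨h₁, h₂⟩)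
  have hne : helixPointD n Δ 1 ≠ helixPointD n Δ 2 :=
    (helixPointD_injective (by omega) Δ).ne (by norm_num)
  have hmin_ge : 1 / (2 * Δ) ≤ minPairDist (helixSampleD n Δ) := by
    refine le_minPairDist (hmem le_rfl (by omega)) (hmem (by norm_num) hn) hne ?_
    rintro _ hp _ hq hpq
    obtain ⟨t, -, rfl⟩ := Finset.mem_image.1 hp
    obtain ⟨u, -, rfl⟩ := Finset.mem_image.1 hq
    exact one_div_two_mul_le_dist_helixPointD (by omega) hΔ hnΔ fun h => hpq (h ▸ rfl)
  have hmin_le : minPairDist (helixSampleD n Δ) ≤ 2 / Δ :=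
    (minPairDist_le_dist (hmem le_rfl (by omega)) (hmem (by norm_num) hn) hne).trans
      (dist_helixPointD_one_two_le hΔ hΔn)
  have hdiam_le : Metric.diam (helixSampleD n Δ : Set E3) ≤ 3 := by
    refine Metric.diam_le_of_forall_dist_le (by norm_num) ?_
    rintro _ hp _ hq
    obtain ⟨t, ht, rfl⟩ := Finset.mem_image.1 hp
    obtain ⟨u, hu, rfl⟩ := Finset.mem_image.1 hq
    exact dist_helixPointD_le_three Δ ht hu
  have hdiam_ge : 1 / 2 ≤ Metric.diam (helixSampleD n Δ : Set E3) := by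
    refine le_trans ?_ ((abs_sub_div_le_dist_helixPointD n Δ 1 n).trans
      (Metric.dist_le_diam_of_mem (helixSampleD n Δ).finite_toSet.isBounded
        (hmem le_rfl (by omega)) (hmem (by omega) le_rfl)))
    have hn' : (2 : ℝ) ≤ n := by exact_mod_cast hn
    rw [abs_div, Nat.abs_cast, abs_sub_comm, abs_of_nonneg (by push_cast; linarith),
      le_div_iff₀ (by positivity)]
    push_cast
    linarith
  constructor
  · calc Δ / 4 = (1 / 2) / (2 / Δ) := by field_simp; ring
      _ ≤ spread (helixSampleD n Δ) :=
          div_le_div₀ (by positivity) hdiam_ge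
            ((by positivity : 0 < 1 / (2 * Δ)).trans_le hmin_ge) hmin_le
  · calc spread (helixSampleD n Δ) ≤ 3 / (1 / (2 * Δ)) :=
          div_le_div₀ (by norm_num) hdiam_le (by positivity) hmin_ge
      _ = 6 * Δ := by field_simp; ring

/-- For all sufficiently large `n` and every `Δ` with `√n ≤ Δ ≤ n`: any two distinct points
of `S_Δ` whose parameters differ by less than `2πΔ` form a Delaunay edge; consequently `S_Δ`
has at least `c·nΔ` Delaunay edges, and the spread of `S_Δ` is `Θ(Δ)`. -/
theorem helixSampleD_lowerbound :
    ∃ c : ℝ, 0 < c ∧ ∃ c₁ : ℝ, 0 < c₁ ∧ ∃ c₂ : ℝ, 0 < c₂ ∧ ∃ n₀ : ℕ,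
      ∀ n : ℕ, n₀ ≤ n → ∀ Δ : ℝ, Real.sqrt n ≤ Δ → Δ ≤ n →
        (∀ t ∈ Finset.Icc 1 n, ∀ u ∈ Finset.Icc 1 n, t ≠ u →
            |(t : ℝ) - (u : ℝ)| < 2 * Real.pi * Δ →
            IsDelaunayEdge (helixSampleD n Δ) (helixPointD n Δ t) (helixPointD n Δ u)) ∧
        c * n * Δ ≤ (delaunayEdgeCount (helixSampleD n Δ) : ℝ) ∧
        c₁ * Δ ≤ spread (helixSampleD n Δ) ∧ spread (helixSampleD n Δ) ≤ c₂ * Δ := by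
  refine ⟨1 / 32, by norm_num, 1 / 4, by norm_num, 6, by norm_num, 16, fun n hn Δ hΔs hΔn => ?_⟩
  have hΔ₀ : 0 ≤ Δ := (Real.sqrt_nonneg _).trans hΔs
  have hnΔ : (n : ℝ) ≤ Δ ^ 2 := (Real.sqrt_le_left hΔ₀).1 hΔs
  have hΔ : 4 ≤ Δ := (Real.le_sqrt_of_sq_le (by norm_num; exact_mod_cast hn)).trans hΔs
  obtain ⟨hspread_ge, hspread_le⟩ :=
    spread_helixSampleD_mem_Icc (by omega) (by linarith) hnΔ hΔn
  refine ⟨fun t ht u hu htu hclose => isDelaunayEdge_helixSampleD (by linarith) ht hu htu hclose,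
    ?_, by linarith, hspread_le⟩
  linarith [mul_le_delaunayEdgeCount_helixSampleD hΔ hΔn]
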